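/- arXiv:2204.05175 — 2 statements merged into one kernel-verified Lean document; each statement's English description precedes it below -/
import Mathlib

section
/- Suppose X = X* + ξ_X with ξ_X independent of X*, and Y = Y* + ξ_Y with ξ_Y independent of (X*, Y*), where ξ_X and ξ_Y have finite means and Assumption 1 holds for (X*, Y*): E[(Y*)²] < ∞, E[‖X*‖²] < ∞, Var(Y*) > 0, Var(X*) nonsingular, and E[Y* | X*] = α₀ + X*'β₀. Let B* = {β ∈ ℝ^p : Y*₀ ⪰cx X*₀'β} and B = {β ∈ ℝ^p : Y₀ ⪰cx X₀'β}. If for every β ∈ B* one has ξ_{Y₀} ⪰cx ξ_{X₀}'β (centered measurement error on the outcome dominates, in the convex order, the centered measurement error on the linear index), then B* ⊆ B. -/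
open MeasureTheory ProbabilityTheory Filter Set

noncomputable section

variable {Ω : Type*} [MeasurableSpace Ω]

/-- The centered version `A₀ = A - E[A]` of a real random variable. -/
def cent (μ : Measure Ω) (f : Ω → ℝ) : Ω → ℝ := fun ω => f ω - ∫ ω', f ω' ∂μ

/-- The centered version `X₀ = X - E[X]` of an `ℝ^p`-valued random vector. -/
def centV {p : ℕ} (μ : Measure Ω) (X : Ω → EuclideanSpace ℝ (Fin p)) :
    Ω → EuclideanSpace ℝ (Fin p) := fun ω => X ω - ∫ ω', X ω' ∂μ

/-- Euclidean inner product `x'y`. -/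
def dotp {p : ℕ} (x y : EuclideanSpace ℝ (Fin p)) : ℝ := ∑ i, x i * y i

/-- `A` dominates `B` in the convex order: for every convex `φ : ℝ → ℝ`,
`E[φ(B)] ≤ E[φ(A)]`, where both expectations are well defined in `(-∞, +∞]`
(any convex `φ` is bounded below by an affine function, so for a random variable
with finite mean the expectation is `+∞` exactly when `φ ∘ ·` is not integrable). -/
def ConvexOrdGE (μ : Measure Ω) (A B : Ω → ℝ) : Prop :=
  ∀ φ : ℝ → ℝ, ConvexOn ℝ Set.univ φ →
    Integrable (fun ω => φ (A ω)) μ →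
      Integrable (fun ω => φ (B ω)) μ ∧ ∫ ω, φ (B ω) ∂μ ≤ ∫ ω, φ (A ω) ∂μ

/-- The cumulative distribution function of a real random variable. -/
def cdfRV (μ : Measure Ω) (A : Ω → ℝ) : ℝ → ℝ := fun t => (μ {ω | A ω ≤ t}).toReal

/-- Generalized inverse (quantile function) `F⁻¹(t) = inf {x : t ≤ F x}` of a cdf. -/
def qf (F : ℝ → ℝ) : ℝ → ℝ := fun t => sInf {x | t ≤ F x}

/-- The ratio of integrated quantiles `R(α, F, G)`. -/
def Rratio (α : ℝ) (F G : ℝ → ℝ) : ℝ := (∫ t in α..1, qf F t) / (∫ t in α..1, qf G t)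

/-- `S(F, G) = inf_{α ∈ (0,1)} R(α, F, G)`. -/
def Sinf (F G : ℝ → ℝ) : ℝ := sInf {r | ∃ α ∈ Set.Ioo (0:ℝ) 1, r = Rratio α F G}

/-- `S_ε(F, G) = min_{α ∈ [ε, 1-ε]} R(α, F, G)`. -/
def Seps (ε : ℝ) (F G : ℝ → ℝ) : ℝ := sInf {r | ∃ α ∈ Set.Icc ε (1 - ε), r = Rratio α F G}

/-- The covariance matrix `Var(X)` of an `ℝ^p`-valued random vector. -/
def covMatrix {p : ℕ} (μ : Measure Ω) (X : Ω → EuclideanSpace ℝ (Fin p)) :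
    Matrix (Fin p) (Fin p) ℝ :=
  Matrix.of fun i j =>
    ∫ ω, (X ω i - ∫ ω', X ω' i ∂μ) * (X ω j - ∫ ω', X ω' j ∂μ) ∂μ

/-- The identified set `B = {β ∈ ℝ^p : Y₀ ⪰cx X₀'β}`. -/
def Bset {p : ℕ} (μ : Measure Ω) (Y : Ω → ℝ) (X : Ω → EuclideanSpace ℝ (Fin p)) :
    Set (EuclideanSpace ℝ (Fin p)) :=
  {β | ConvexOrdGE μ (cent μ Y) (fun ω => dotp (centV μ X ω) β)}

/-- The regularized outer set `B_ε = {λ q : q ∈ S_p, 0 ≤ λ ≤ S_ε(F_{Y₀}, F_{X₀'q})}`. -/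
def BepsSet {p : ℕ} (μ : Measure Ω) (Y : Ω → ℝ) (X : Ω → EuclideanSpace ℝ (Fin p)) (ε : ℝ) :
    Set (EuclideanSpace ℝ (Fin p)) :=
  {x | ∃ (q : EuclideanSpace ℝ (Fin p)) (l : ℝ), ‖q‖ = 1 ∧ 0 ≤ l ∧
    l ≤ Seps ε (cdfRV μ (cent μ Y)) (cdfRV μ (fun ω => dotp (centV μ X ω) q)) ∧ x = l • q}

/-!
Centering is additive, so `Y₀ = Y*₀ + ξ_{Y₀}` and `X₀'β = X*₀'β + ξ_{X₀}'β`. Adding to both sides of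
a convex-order relation a common summand that is independent of each side preserves the relation:
integrate first in the other variable and use that `x ↦ φ (x + e)` is convex for each fixed `e`.
Since `ξ_Y` is independent of `(X*, Y*)` and `X*` is independent of `ξ_Y` and of `ξ_X`, this gives
`Y*₀ + ξ_{Y₀} ⪰cx X*₀'β + ξ_{Y₀} ⪰cx X*₀'β + ξ_{X₀}'β` for every `β ∈ B*`.

Expectations that may be `+∞` are handled by subtracting an affine minorant from `φ`, which does
not change the comparison (both sides have the same mean) and makes `φ` nonnegative, so that the
comparison can be carried out with lower Lebesgue integrals.
-/

open scoped ENNReal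

theorem ConvexOn.continuous_of_univ {E : Type*} [NormedAddCommGroup E] [NormedSpace ℝ E]
    [FiniteDimensional ℝ E] {f : E → ℝ} (hf : ConvexOn ℝ univ f) : Continuous f :=
  continuousOn_univ.1 (hf.continuousOn isOpen_univ)

theorem ProbabilityTheory.IndepFun.lintegral_comp_eq {μ : Measure Ω} [IsFiniteMeasure μ]
    {α β : Type*} [MeasurableSpace α] [MeasurableSpace β] {f : Ω → α} {g : Ω → β}
    (h : IndepFun f g μ) (hf : AEMeasurable f μ) (hg : AEMeasurable g μ)
    {F : α → β → ℝ≥0∞} (hF : Measurable (Function.uncurry F)) :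
    ∫⁻ ω, F (f ω) (g ω) ∂μ = ∫⁻ y, ∫⁻ ω, F (f ω) y ∂μ ∂(μ.map g) := by
  calc ∫⁻ ω, F (f ω) (g ω) ∂μ
      = ∫⁻ z, Function.uncurry F z ∂(μ.map fun ω => (f ω, g ω)) :=
        (lintegral_map' hF.aemeasurable (hf.prodMk hg)).symm
    _ = ∫⁻ y, ∫⁻ x, F x y ∂(μ.map f) ∂(μ.map g) := by
        rw [(indepFun_iff_map_prod_eq_prod_map_map hf hg).1 h, lintegral_prod_symm' _ hF]
        rfl
    _ = ∫⁻ y, ∫⁻ ω, F (f ω) y ∂μ ∂(μ.map g) :=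
        lintegral_congr fun y =>
          lintegral_map' (hF.comp (measurable_id.prodMk measurable_const)).aemeasurable hf

namespace ConvexOrdGE

variable {μ : Measure Ω} {A B C E : Ω → ℝ}

theorem trans (hAB : ConvexOrdGE μ A B) (hBC : ConvexOrdGE μ B C) : ConvexOrdGE μ A C :=
  fun φ hφ hφA =>
    let ⟨hφB, hBA⟩ := hAB φ hφ hφA
    let ⟨hφC, hCB⟩ := hBC φ hφ hφB
    ⟨hφC, hCB.trans hBA⟩

theorem integrable_right (h : ConvexOrdGE μ A B) (hA : Integrable A μ) : Integrable B μ :=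
  (h id (convexOn_id convex_univ) hA).1

theorem integral_eq (h : ConvexOrdGE μ A B) (hA : Integrable A μ) :
    ∫ ω, B ω ∂μ = ∫ ω, A ω ∂μ := by
  have hle := (h id (convexOn_id convex_univ) hA).2
  have hge := (h (-id) (concaveOn_id convex_univ).neg hA.neg).2
  simp only [Pi.neg_apply, id, integral_neg, neg_le_neg_iff] at hle hge
  exact le_antisymm hle hge

theorem lintegral_ofReal_le (h : ConvexOrdGE μ A B) (hA : AEMeasurable A μ) {ψ : ℝ → ℝ}
    (hψ : ConvexOn ℝ univ ψ) (hψ0 : ∀ x, 0 ≤ ψ x) :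
    ∫⁻ ω, ENNReal.ofReal (ψ (B ω)) ∂μ ≤ ∫⁻ ω, ENNReal.ofReal (ψ (A ω)) ∂μ := by
  by_cases hfin : ∫⁻ ω, ENNReal.ofReal (ψ (A ω)) ∂μ = ∞
  · simp [hfin]
  have hψA : Integrable (fun ω => ψ (A ω)) μ :=
    (lintegral_ofReal_ne_top_iff_integrable
      (hψ.continuous_of_univ.measurable.comp_aemeasurable hA).aestronglyMeasurable
      (ae_of_all _ fun _ => hψ0 _)).1 hfin
  obtain ⟨hψB, hle⟩ := h ψ hψ hψA
  rw [← ofReal_integral_eq_lintegral_ofReal hψA (ae_of_all _ fun _ => hψ0 _),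
    ← ofReal_integral_eq_lintegral_ofReal hψB (ae_of_all _ fun _ => hψ0 _)]
  exact ENNReal.ofReal_le_ofReal hle

theorem of_lintegral_ofReal_le [IsProbabilityMeasure μ] (hA : Integrable A μ)
    (hB : Integrable B μ) (hmean : ∫ ω, B ω ∂μ = ∫ ω, A ω ∂μ)
    (H : ∀ ψ : ℝ → ℝ, ConvexOn ℝ univ ψ → (∀ x, 0 ≤ ψ x) →
      ∫⁻ ω, ENNReal.ofReal (ψ (B ω)) ∂μ ≤ ∫⁻ ω, ENNReal.ofReal (ψ (A ω)) ∂μ) :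
    ConvexOrdGE μ A B := by
  intro φ hφ hφA
  obtain ⟨d, c, hℓφ⟩ :=
    hφ.exists_affine_le_real isClosed_univ (hφ.continuousOn isOpen_univ).lowerSemicontinuousOn
  set ℓ : ℝ → ℝ := fun x => d * x + c
  have hψ : ConvexOn ℝ univ (φ - ℓ) :=
    hφ.sub (((LinearMap.mul ℝ ℝ d).concaveOn convex_univ).add_const c)
  have hψ0 : ∀ x, 0 ≤ (φ - ℓ) x := fun x => sub_nonneg.2 (hℓφ x trivial)
  have hℓ : ∀ {Z : Ω → ℝ}, Integrable Z μ → Integrable (fun ω => ℓ (Z ω)) μ :=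
    fun hZ => (hZ.const_mul d).add (integrable_const c)
  have hℓmean : ∫ ω, ℓ (B ω) ∂μ = ∫ ω, ℓ (A ω) ∂μ := by
    simp only [ℓ, integral_add (hB.const_mul d) (integrable_const c),
      integral_add (hA.const_mul d) (integrable_const c), integral_const_mul, hmean]
  have hψA : Integrable (fun ω => (φ - ℓ) (A ω)) μ := hφA.sub (hℓ hA)
  have hψB : Integrable (fun ω => (φ - ℓ) (B ω)) μ := by
    refine (lintegral_ofReal_ne_top_iff_integrable
      ((hψ.continuous_of_univ.measurable.comp_aemeasurable hB.aemeasurable).aestronglyMeasurable)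
      (ae_of_all _ fun _ => hψ0 _)).1 (ne_top_of_le_ne_top ?_ (H _ hψ hψ0))
    rw [← ofReal_integral_eq_lintegral_ofReal hψA (ae_of_all _ fun _ => hψ0 _)]
    exact ENNReal.ofReal_ne_top
  have hφB : Integrable (fun ω => φ (B ω)) μ := by
    refine (hψB.add (hℓ hB)).congr (ae_of_all _ fun ω => ?_)
    simp
  have hψle : ∫ ω, (φ - ℓ) (B ω) ∂μ ≤ ∫ ω, (φ - ℓ) (A ω) ∂μ := by
    rw [← ENNReal.ofReal_le_ofReal_iff (integral_nonneg fun _ => hψ0 _),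
      ofReal_integral_eq_lintegral_ofReal hψA (ae_of_all _ fun _ => hψ0 _),
      ofReal_integral_eq_lintegral_ofReal hψB (ae_of_all _ fun _ => hψ0 _)]
    exact H _ hψ hψ0
  refine ⟨hφB, ?_⟩
  simp only [Pi.sub_apply] at hψle
  rw [integral_sub hφB (hℓ hB), integral_sub hφA (hℓ hA), hℓmean] at hψle
  linarith

theorem add_indepFun [IsProbabilityMeasure μ] (h : ConvexOrdGE μ A B) (hA : Integrable A μ)
    (hE : Integrable E μ) (hAE : IndepFun A E μ) (hBE : IndepFun B E μ) :
    ConvexOrdGE μ (fun ω => A ω + E ω) (fun ω => B ω + E ω) := by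
  have hB := h.integrable_right hA
  refine of_lintegral_ofReal_le (hA.add hE) (hB.add hE)
    (by rw [integral_add hB hE, integral_add hA hE, h.integral_eq hA]) fun ψ hψ hψ0 => ?_
  have hF : Measurable (Function.uncurry fun a e : ℝ => ENNReal.ofReal (ψ (a + e))) :=
    ENNReal.measurable_ofReal.comp (hψ.continuous_of_univ.measurable.comp measurable_add)
  rw [hBE.lintegral_comp_eq hB.aemeasurable hE.aemeasurable hF,
    hAE.lintegral_comp_eq hA.aemeasurable hE.aemeasurable hF]
  exact lintegral_mono fun e =>
    h.lintegral_ofReal_le hA.aemeasurable (hψ.translate_left e) fun _ => hψ0 _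

end ConvexOrdGE

section Centering

variable {μ : Measure Ω} {f g : Ω → ℝ}

theorem MeasureTheory.Integrable.cent [IsFiniteMeasure μ] (hf : Integrable f μ) :
    Integrable (cent μ f) μ :=
  hf.sub (integrable_const _)

theorem cent_add (hf : Integrable f μ) (hg : Integrable g μ) :
    cent μ (fun ω => f ω + g ω) = fun ω => cent μ f ω + cent μ g ω := by
  funext ω
  simp only [cent, integral_add hf hg]
  ring

theorem ProbabilityTheory.IndepFun.cent (h : IndepFun f g μ) :
    IndepFun (cent μ f) (cent μ g) μ :=
  h.comp (measurable_id.sub_const _) (measurable_id.sub_const _)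

variable {p : ℕ}

theorem dotp_eq_innerSL (x y : EuclideanSpace ℝ (Fin p)) : dotp x y = innerSL ℝ y x := by
  simp [dotp, PiLp.inner_apply]

theorem continuous_dotp_left (y : EuclideanSpace ℝ (Fin p)) : Continuous fun x => dotp x y := by
  simp_rw [dotp_eq_innerSL]
  exact (innerSL ℝ y).continuous

theorem dotp_add_left (x x' y : EuclideanSpace ℝ (Fin p)) :
    dotp (x + x') y = dotp x y + dotp x' y := by
  simp only [dotp_eq_innerSL, map_add]

theorem MeasureTheory.Integrable.dotp_left {X : Ω → EuclideanSpace ℝ (Fin p)}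
    (hX : Integrable X μ) (y : EuclideanSpace ℝ (Fin p)) :
    Integrable (fun ω => dotp (X ω) y) μ := by
  simp_rw [dotp_eq_innerSL]
  exact (innerSL ℝ y).integrable_comp hX

theorem dotp_centV {X : Ω → EuclideanSpace ℝ (Fin p)} (hX : Integrable X μ)
    (y : EuclideanSpace ℝ (Fin p)) :
    (fun ω => dotp (centV μ X ω) y) = cent μ (fun ω => dotp (X ω) y) := by
  funext ω
  simp only [centV, cent, dotp_eq_innerSL, map_sub, (innerSL ℝ y).integral_comp_comm hX]

end Centering

theorem stmt18_general (μ : Measure Ω) [IsProbabilityMeasure μ] {p : ℕ}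
    (Ystar : Ω → ℝ) (Xstar : Ω → EuclideanSpace ℝ (Fin p))
    (ξY : Ω → ℝ) (ξX : Ω → EuclideanSpace ℝ (Fin p))
    (hξYint : Integrable ξY μ) (hξXint : Integrable ξX μ)
    -- measurement error structure
    (hindX : IndepFun ξX Xstar μ)
    (hindY : IndepFun ξY (fun ω => (Xstar ω, Ystar ω)) μ)
    -- Assumption 1 for (X*, Y*)
    (hY2 : MemLp Ystar 2 μ) (hX2 : MemLp Xstar 2 μ)
    -- the measurement errors on the outcome dominate those on the index
    (hdom : ∀ β ∈ Bset μ Ystar Xstar,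
      ConvexOrdGE μ (cent μ ξY) (fun ω => dotp (centV μ ξX ω) β)) :
    Bset μ Ystar Xstar ⊆
      Bset μ (fun ω => Ystar ω + ξY ω) (fun ω => Xstar ω + ξX ω) := by
  intro β hβ
  have hYi : Integrable Ystar μ := hY2.integrable one_le_two
  have hXi : Integrable Xstar μ := hX2.integrable one_le_two
  have hlatent : ConvexOrdGE μ (cent μ Ystar) (cent μ fun ω => dotp (Xstar ω) β) := by
    rw [← dotp_centV hXi]; exact hβ
  have herror : ConvexOrdGE μ (cent μ ξY) (cent μ fun ω => dotp (ξX ω) β) := by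
    rw [← dotp_centV hξXint]; exact hdom β hβ
  have hdotp := (continuous_dotp_left β).measurable
  have hYξY : IndepFun Ystar ξY μ := (hindY.comp measurable_id measurable_snd).symm
  have hXξY : IndepFun (fun ω => dotp (Xstar ω) β) ξY μ :=
    (hindY.comp measurable_id (hdotp.comp measurable_fst)).symm
  have hξXX : IndepFun (fun ω => dotp (ξX ω) β) (fun ω => dotp (Xstar ω) β) μ :=
    hindX.comp hdotp hdotp
  have hlatent_add := hlatent.add_indepFun hYi.cent hξYint.cent hYξY.cent hXξY.cent
  have herror_add := herror.add_indepFun hξYint.cent (hXi.dotp_left β).cent hXξY.symm.cent hξXX.cent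
  change ConvexOrdGE μ (cent μ _) (fun ω => dotp (centV μ (fun ω => Xstar ω + ξX ω) ω) β)
  rw [cent_add hYi hξYint, dotp_centV (X := fun ω => Xstar ω + ξX ω) (hXi.add hξXint)]
  simp only [dotp_add_left]
  rw [cent_add (hXi.dotp_left β) (hξXint.dotp_left β)]
  exact hlatent_add.trans (by simpa only [add_comm] using herror_add)

/-- robustness to measurement error. If `X = X* + ξ_X` with
`ξ_X ⊥ X*`, `Y = Y* + ξ_Y` with `ξ_Y ⊥ (X*, Y*)`, Assumption 1 holds for `(X*, Y*)`,
and for every `β` in the latent identified set `B*` the centered error `ξ_{Y₀}`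
dominates `ξ_{X₀}'β` in the convex order, then `B* ⊆ B`. -/
theorem stmt18 (μ : Measure Ω) [IsProbabilityMeasure μ] {p : ℕ}
    (Ystar : Ω → ℝ) (Xstar : Ω → EuclideanSpace ℝ (Fin p))
    (ξY : Ω → ℝ) (ξX : Ω → EuclideanSpace ℝ (Fin p))
    (hYsm : Measurable Ystar) (hXsm : Measurable Xstar)
    (hξYm : Measurable ξY) (hξXm : Measurable ξX)
    (hξYint : Integrable ξY μ) (hξXint : Integrable ξX μ)
    -- measurement error structure
    (hindX : IndepFun ξX Xstar μ)
    (hindY : IndepFun ξY (fun ω => (Xstar ω, Ystar ω)) μ)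
    -- Assumption 1 for (X*, Y*)
    (hY2 : MemLp Ystar 2 μ) (hX2 : MemLp Xstar 2 μ)
    (hVarY : 0 < variance Ystar μ) (hVarX : (covMatrix μ Xstar).det ≠ 0)
    (α₀ : ℝ) (β₀ : EuclideanSpace ℝ (Fin p))
    (hmod : μ[Ystar | MeasurableSpace.comap Xstar inferInstance]
      =ᵐ[μ] fun ω => α₀ + dotp (Xstar ω) β₀)
    -- the measurement errors on the outcome dominate those on the index
    (hdom : ∀ β ∈ Bset μ Ystar Xstar,
      ConvexOrdGE μ (cent μ ξY) (fun ω => dotp (centV μ ξX ω) β)) :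
    Bset μ Ystar Xstar ⊆
      Bset μ (fun ω => Ystar ω + ξY ω) (fun ω => Xstar ω + ξX ω) :=
  stmt18_general μ Ystar Xstar ξY ξX hξYint hξXint hindX hindY hY2 hX2 hdom
end
end

section
/- Let F be a Borel probability measure on ℝ with finite first moment and G a Borel probability measure on ℝ × ℝ^p with finite first moment, and let G₁ denote the first (real-valued) marginal of G. Define W_w(F, G₁) as the infimum, over all pairs of random variables (U, V₁) defined on a common probability space with U ∼ F and V₁ ∼ G₁, of E[ |V₁ − E[U | V₁]| ], and define W_c(F, G) as the infimum, over all triples (U, V₁, V₂) on a common probability space with U ∼ F and (V₁, V₂) ∼ G, of E[ |V₁ − E[U | V₁, V₂]| ]. Then W_c(F, G) ≤ W_w(F, G₁). -/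
open MeasureTheory ProbabilityTheory Filter Set

noncomputable section

/-- `W_w(F, G₁)`: the infimum over couplings `(U, V₁)` on a common probability space,
with `U ∼ F` and `V₁ ∼ G₁`, of `E[|V₁ - E[U | V₁]|]`. -/
def Ww (F G₁ : Measure ℝ) : ℝ :=
  sInf {r | ∃ (Ω : Type) (_ : MeasurableSpace Ω) (μ : Measure Ω) (U V₁ : Ω → ℝ),
    IsProbabilityMeasure μ ∧ Measurable U ∧ Measurable V₁ ∧
    μ.map U = F ∧ μ.map V₁ = G₁ ∧
    r = ∫ ω, |V₁ ω - (μ[U | MeasurableSpace.comap V₁ inferInstance]) ω| ∂μ}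

/-- `W_c(F, G)`: the infimum over couplings `(U, V₁, V₂)` on a common probability
space, with `U ∼ F` and `(V₁, V₂) ∼ G`, of `E[|V₁ - E[U | V₁, V₂]|]`. -/
def Wc {p : ℕ} (F : Measure ℝ) (G : Measure (ℝ × EuclideanSpace ℝ (Fin p))) : ℝ :=
  sInf {r | ∃ (Ω : Type) (_ : MeasurableSpace Ω) (μ : Measure Ω) (U V₁ : Ω → ℝ)
      (V₂ : Ω → EuclideanSpace ℝ (Fin p)),
    IsProbabilityMeasure μ ∧ Measurable U ∧ Measurable V₁ ∧ Measurable V₂ ∧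
    μ.map U = F ∧ μ.map (fun ω => (V₁ ω, V₂ ω)) = G ∧
    r = ∫ ω, |V₁ ω -
        (μ[U | MeasurableSpace.comap (fun ω' => (V₁ ω', V₂ ω')) inferInstance]) ω| ∂μ}

/-! Given a coupling `(U, V₁)` of `F` and `G₁` on `(Ω, μ)`, draw `V₂` from the disintegration
`κ = G.condKernel` at `V₁`, i.e. pass to `μ ⊗ₘ κ(V₁ ·)` on `Ω × ℝ^p`. Then `(V₁, V₂) ∼ G`, and
`V₂` is conditionally independent of `U` given `V₁`, so `E[U | V₁, V₂] = E[U | V₁]` a.s.: every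
value of the infimum defining `W_w` is also a value of the infimum defining `W_c`. -/

theorem integral_mul_condExp_of_stronglyMeasurable {Ω : Type*} {m m₀ : MeasurableSpace Ω}
    {μ : Measure[m₀] Ω} (hm : m ≤ m₀) [SigmaFinite (μ.trim hm)] {f w : Ω → ℝ} {C : ℝ}
    (hw : StronglyMeasurable[m] w) (hw_bdd : ∀ ω, ‖w ω‖ ≤ C) (hf : Integrable f μ) :
    ∫ ω, w ω * (μ[f | m]) ω ∂μ = ∫ ω, w ω * f ω ∂μ := by
  have hwf : Integrable (w * f) μ :=
    hf.bdd_mul (hw.mono hm).aestronglyMeasurable (ae_of_all _ hw_bdd)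
  calc ∫ ω, w ω * (μ[f | m]) ω ∂μ = ∫ ω, (μ[w * f | m]) ω ∂μ :=
        integral_congr_ae (condExp_mul_of_stronglyMeasurable_left hw hwf hf).symm
    _ = ∫ ω, w ω * f ω ∂μ := integral_condExp hm

section CompProdComap

variable {Ω α β : Type*} [MeasurableSpace Ω] [MeasurableSpace α] [MeasurableSpace β]
  {μ : Measure Ω} {X : Ω → α} {κ : Kernel α β}

lemma map_compProd_comap [SFinite μ] [IsSFiniteKernel κ] (hX : Measurable X) :
    (μ ⊗ₘ κ.comap X hX).map (fun z => (X z.1, z.2)) = μ.map X ⊗ₘ κ := by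
  ext s hs
  rw [Measure.map_apply (by fun_prop) hs, Measure.compProd_apply hs,
    Measure.compProd_apply (measurableSet_preimage (by fun_prop) hs),
    lintegral_map (Kernel.measurable_kernel_prodMk_left hs) hX]
  rfl

lemma integrable_comp_fst_compProd [SFinite μ] {E : Type*} [NormedAddCommGroup E] {f : Ω → E}
    (hf : Integrable f μ) (η : Kernel Ω β) [IsMarkovKernel η] :
    Integrable (fun z => f z.1) (μ ⊗ₘ η) := by
  rw [← Measure.fst_compProd μ η] at hf
  exact hf.comp_measurable measurable_fst

lemma integral_comp_fst_compProd [SFinite μ] {E : Type*} [NormedAddCommGroup E]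
    [NormedSpace ℝ E] {f : Ω → E} (hf : AEStronglyMeasurable f μ) (η : Kernel Ω β)
    [IsMarkovKernel η] :
    ∫ z, f z.1 ∂(μ ⊗ₘ η) = ∫ ω, f ω ∂μ := by
  rw [← Measure.fst_compProd μ η] at hf
  conv_rhs => rw [← Measure.fst_compProd μ η]
  exact (integral_map measurable_fst.aemeasurable hf).symm

lemma setIntegral_preimage_compProd_comap [SFinite μ] [IsMarkovKernel κ] (hX : Measurable X)
    {h : Ω → ℝ} (hh : Integrable h μ) {A : Set (α × β)} (hA : MeasurableSet A) :
    ∫ z in (fun z => (X z.1, z.2)) ⁻¹' A, h z.1 ∂(μ ⊗ₘ κ.comap X hX) =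
      ∫ ω, (κ (X ω)).real (Prod.mk (X ω) ⁻¹' A) * h ω ∂μ := by
  have hA' : MeasurableSet ((fun z : Ω × β => (X z.1, z.2)) ⁻¹' A) :=
    measurableSet_preimage (by fun_prop) hA
  rw [← integral_indicator hA',
    Measure.integral_compProd ((integrable_comp_fst_compProd hh _).indicator hA')]
  refine integral_congr_ae (ae_of_all _ fun ω => ?_)
  change ∫ y, (Prod.mk (X ω) ⁻¹' A).indicator (fun _ => h ω) y ∂(κ (X ω)) = _
  rw [integral_indicator_const _ (measurable_prodMk_left hA), smul_eq_mul]

theorem condExp_comp_fst_compProd_comap [IsFiniteMeasure μ] [IsMarkovKernel κ]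
    (hX : Measurable X) {f : Ω → ℝ} (hf : Integrable f μ) :
    (μ ⊗ₘ κ.comap X hX)[fun z => f z.1 |
        MeasurableSpace.comap (fun z => (X z.1, z.2)) inferInstance]
      =ᵐ[μ ⊗ₘ κ.comap X hX] fun z => (μ[f | MeasurableSpace.comap X inferInstance]) z.1 := by
  have hΦ : Measurable fun z : Ω × β => (X z.1, z.2) := by fun_prop
  have hfst : Measurable[MeasurableSpace.comap (fun z => (X z.1, z.2)) inferInstance,
      MeasurableSpace.comap X inferInstance] (Prod.fst : Ω × β → Ω) := by
    rintro _ ⟨t, ht, rfl⟩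
    exact ⟨t ×ˢ univ, ht.prod .univ, by ext; simp⟩
  refine (ae_eq_condExp_of_forall_setIntegral_eq hΦ.comap_le
    (integrable_comp_fst_compProd hf _) (fun s _ _ => ?_) ?_ ?_).symm
  · exact (integrable_comp_fst_compProd integrable_condExp _).integrableOn
  · -- Both sides become `∫ w * h ∂μ` with `w ω = κ (X ω) (A-section at X ω)`, which is bounded
    -- and `σ(X)`-measurable, so `h` may be replaced by its conditional expectation.
    rintro _ ⟨A, hA, rfl⟩ _
    rw [setIntegral_preimage_compProd_comap hX integrable_condExp hA,
      setIntegral_preimage_compProd_comap hX hf hA]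
    refine integral_mul_condExp_of_stronglyMeasurable (C := 1) hX.comap_le ?_ (fun ω => ?_) hf
    · exact ((Kernel.measurable_kernel_prodMk_left hA).ennreal_toReal.comp
        (comap_measurable X)).stronglyMeasurable
    · rw [Real.norm_of_nonneg measureReal_nonneg]
      exact measureReal_le_one
  · exact (stronglyMeasurable_condExp.comp_measurable hfst).aestronglyMeasurable

end CompProdComap

lemma le_Ww {F G₁ : Measure ℝ} [IsProbabilityMeasure F] [IsProbabilityMeasure G₁] {c : ℝ}
    (h : ∀ (Ω : Type) [MeasurableSpace Ω] (μ : Measure Ω) [IsProbabilityMeasure μ]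
      (U V₁ : Ω → ℝ), Measurable U → Measurable V₁ → μ.map U = F → μ.map V₁ = G₁ →
      c ≤ ∫ ω, |V₁ ω - (μ[U | MeasurableSpace.comap V₁ inferInstance]) ω| ∂μ) :
    c ≤ Ww F G₁ := by
  refine le_csInf ⟨_, ℝ × ℝ, inferInstance, F.prod G₁, Prod.fst, Prod.snd, inferInstance,
    measurable_fst, measurable_snd, Measure.fst_prod, Measure.snd_prod, rfl⟩ ?_
  rintro r ⟨Ω, _, μ, U, V₁, _, hU, hV₁, hUF, hV₁G, rfl⟩
  exact h Ω μ U V₁ hU hV₁ hUF hV₁G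

lemma Wc_le_integral {p : ℕ} {F : Measure ℝ} {G : Measure (ℝ × EuclideanSpace ℝ (Fin p))}
    {Ω : Type} [MeasurableSpace Ω] (μ : Measure Ω) [IsProbabilityMeasure μ] {U V₁ : Ω → ℝ}
    {V₂ : Ω → EuclideanSpace ℝ (Fin p)} (hU : Measurable U) (hV₁ : Measurable V₁)
    (hV₂ : Measurable V₂) (hUF : μ.map U = F) (hVG : μ.map (fun ω => (V₁ ω, V₂ ω)) = G) :
    Wc F G ≤ ∫ ω, |V₁ ω -
      (μ[U | MeasurableSpace.comap (fun ω' => (V₁ ω', V₂ ω')) inferInstance]) ω| ∂μ :=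
  csInf_le ⟨0, by
      rintro _ ⟨_, _, _, _, _, _, _, _, _, _, _, _, rfl⟩
      exact integral_nonneg fun _ => abs_nonneg _⟩
    ⟨Ω, _, μ, U, V₁, V₂, inferInstance, hU, hV₁, hV₂, hUF, hVG, rfl⟩

theorem stmt19_general {p : ℕ} (F : Measure ℝ) (G : Measure (ℝ × EuclideanSpace ℝ (Fin p)))
    [IsProbabilityMeasure F] [IsProbabilityMeasure G]
    (hF : Integrable (fun x => x) F) :
    Wc F G ≤ Ww F (G.map Prod.fst) := by
  have : IsProbabilityMeasure (G.map Prod.fst) :=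
    Measure.isProbabilityMeasure_map measurable_fst.aemeasurable
  refine le_Ww fun Ω _ μ _ U V₁ hU hV₁ hUF hV₁G => ?_
  let μ' := μ ⊗ₘ G.condKernel.comap V₁ hV₁
  have hUint : Integrable U μ := by
    rw [← hUF] at hF
    exact hF.comp_measurable hU
  have hU'F : μ'.map (fun z => U z.1) = F := by
    rw [← hUF, ← Measure.fst_compProd μ (G.condKernel.comap V₁ hV₁), Measure.fst,
      Measure.map_map hU measurable_fst]
    rfl
  have hV'G : μ'.map (fun z => (V₁ z.1, z.2)) = G := by
    rw [map_compProd_comap, hV₁G]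
    exact G.disintegrate G.condKernel
  calc Wc F G ≤ ∫ z, |V₁ z.1 - (μ'[fun z => U z.1 |
          MeasurableSpace.comap (fun z => (V₁ z.1, z.2)) inferInstance]) z| ∂μ' :=
        Wc_le_integral μ' (hU.comp measurable_fst) (hV₁.comp measurable_fst) measurable_snd
          hU'F hV'G
    _ = ∫ z, |V₁ z.1 - (μ[U | MeasurableSpace.comap V₁ inferInstance]) z.1| ∂μ' := by
        refine integral_congr_ae ?_
        filter_upwards [condExp_comp_fst_compProd_comap hV₁ hUint] with z hz
        rw [hz]
    _ = ∫ ω, |V₁ ω - (μ[U | MeasurableSpace.comap V₁ inferInstance]) ω| ∂μ :=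
        integral_comp_fst_compProd ((hV₁.sub
          (stronglyMeasurable_condExp.mono hV₁.comap_le).measurable).abs.aestronglyMeasurable) _

/-- For `F` a Borel probability measure on `ℝ` and `G` a Borel
probability measure on `ℝ × ℝ^p`, both with finite first moments, and `G₁` the first
marginal of `G`, one has `W_c(F, G) ≤ W_w(F, G₁)`. -/
theorem stmt19 {p : ℕ} (F : Measure ℝ) (G : Measure (ℝ × EuclideanSpace ℝ (Fin p)))
    [IsProbabilityMeasure F] [IsProbabilityMeasure G]
    (hF : Integrable (fun x => x) F) (hG : Integrable (fun x => ‖x‖) G) :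
    Wc F G ≤ Ww F (G.map Prod.fst) :=
  stmt19_general F G hF
end
end
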